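/- arXiv:1001.1797 — 3 statements merged into one kernel-verified Lean document; each statement's English description precedes it below -/
import Mathlib

section
/- The comultiplication Δ_C is coassociative: (Δ_C ⊗ id_A) ∘ Δ_C = (id_A ⊗ Δ_C) ∘ Δ_C as R-linear maps A → A ⊗_R A ⊗_R A. -/
open TensorProduct Polynomial

noncomputable section

variable {R : Type*} [CommRing R]

/-- The algebra `A = R[X]/(X² - h·X - a)`. -/
abbrev FrobA (a h : R) : Type _ := AdjoinRoot (X ^ 2 - C h * X - C a)

/-- The image of the variable `X` in `A`. -/
abbrev FrobX (a h : R) : FrobA a h := AdjoinRoot.root _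

theorem Polynomial.monic_X_pow_two_sub_C_mul_X_sub_C (a h : R) :
    (X ^ 2 - C h * X - C a : R[X]).Monic := by
  monicity!

theorem AdjoinRoot.linearMap_ext {g : R[X]} (hg : g.Monic) {M : Type*} [AddCommGroup M]
    [Module R M] {f₁ f₂ : AdjoinRoot g →ₗ[R] M}
    (h : ∀ i < g.natDegree, f₁ (root g ^ i) = f₂ (root g ^ i)) : f₁ = f₂ :=
  (powerBasis' hg).basis.ext fun i => by
    rw [PowerBasis.basis_eq_pow]
    exact h i i.isLt

theorem FrobA.linearMap_ext {a h : R} {M : Type*} [AddCommGroup M] [Module R M]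
    {f₁ f₂ : FrobA a h →ₗ[R] M} (h1 : f₁ 1 = f₂ 1) (hX : f₁ (FrobX a h) = f₂ (FrobX a h)) :
    f₁ = f₂ := by
  refine AdjoinRoot.linearMap_ext (monic_X_pow_two_sub_C_mul_X_sub_C a h) fun i hi => ?_
  have hi2 : i < 2 := hi.trans_le (by compute_degree)
  interval_cases i
  · rwa [pow_zero]
  · rwa [pow_one]

/-- `Δ_C` is coassociative. -/
theorem coassoc (a h : R)
    (ΔC : FrobA a h →ₗ[R] FrobA a h ⊗[R] FrobA a h)
    (hΔ1 : ΔC 1 = (1 : FrobA a h) ⊗ₜ[R] FrobX a h + FrobX a h ⊗ₜ[R] (1 : FrobA a h)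
      - h • ((1 : FrobA a h) ⊗ₜ[R] (1 : FrobA a h)))
    (hΔX : ΔC (FrobX a h) = FrobX a h ⊗ₜ[R] FrobX a h
      + a • ((1 : FrobA a h) ⊗ₜ[R] (1 : FrobA a h))) :
    (TensorProduct.assoc R (FrobA a h) (FrobA a h) (FrobA a h)).toLinearMap ∘ₗ
        TensorProduct.map ΔC LinearMap.id ∘ₗ ΔC =
      TensorProduct.map LinearMap.id ΔC ∘ₗ ΔC := by
  refine FrobA.linearMap_ext ?_ ?_ <;>
  · simp only [LinearMap.comp_apply, hΔ1, hΔX, map_add, map_sub, map_smul, map_tmul,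
      LinearMap.id_apply, LinearEquiv.coe_coe, assoc_tmul, ← smul_tmul', tmul_smul, sub_tmul,
      tmul_sub, add_tmul, tmul_add]
    module

end
end

section
/- The map z₂* is a homomorphism of coalgebras from (A, Δ_W, ε_W) to (A, Δ_C, ε_C): ε_C ∘ z₂* = ε_W and Δ_C ∘ z₂* = (z₂* ⊗ z₂*) ∘ Δ_W. -/
/-!
Write `z₂* = i • z₂`, where `z₂` is the `R`-algebra involution of `A` swapping the two roots `X`
and `h - X` of `X² - h·X - a`. Checking on the basis `1, X`, the involution reverses the signs of
`ε_C` and `Δ_C`: `ε_C ∘ z₂ = -ε_C` and `Δ_C ∘ z₂ = -(z₂ ⊗ z₂) ∘ Δ_C`. Since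
`ε_W = -i • ε_C` and `Δ_W = i • Δ_C`, both identities follow from `i² = -1`.
-/


open TensorProduct Polynomial

noncomputable section

variable {R : Type*} [CommRing R]

theorem AdjoinRoot.linearMap_ext_of_monic {p : R[X]} (hp : p.Monic) {M : Type*}
    [AddCommMonoid M] [Module R M] {f g : AdjoinRoot p →ₗ[R] M}
    (hfg : ∀ k < p.natDegree, f (root p ^ k) = g (root p ^ k)) : f = g :=
  (powerBasis' hp).basis.ext fun k => by
    simpa only [PowerBasis.coe_basis, powerBasis'_gen] using hfg k k.2

namespace FrobA

variable {a h : R}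

theorem monic : (X ^ 2 - C h * X - C a : R[X]).Monic := by
  monicity!

theorem linearMap_ext_s8 {M : Type*} [AddCommMonoid M] [Module R M] {f g : FrobA a h →ₗ[R] M}
    (h1 : f 1 = g 1) (hX : f (FrobX a h) = g (FrobX a h)) : f = g := by
  refine AdjoinRoot.linearMap_ext_of_monic monic fun k hk => ?_
  have hdeg : (X ^ 2 - C h * X - C a : R[X]).natDegree ≤ 2 := by compute_degree
  obtain rfl | rfl : k = 0 ∨ k = 1 := by omega
  exacts [by simpa using h1, by simpa using hX]

theorem frobX_sq :
    FrobX a h ^ 2 = algebraMap R (FrobA a h) h * FrobX a h + algebraMap R (FrobA a h) a := by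
  have := AdjoinRoot.eval₂_root (X ^ 2 - C h * X - C a)
  simp only [eval₂_sub, eval₂_pow, eval₂_mul, eval₂_X, eval₂_C, ← AdjoinRoot.algebraMap_eq] at this
  linear_combination this

/-- The paper's `z₂`: the involution `X ↦ h - X`, which exists because `h - X` is the other root
of `X² - h·X - a`. -/
def conj (a h : R) : FrobA a h →ₐ[R] FrobA a h :=
  AdjoinRoot.liftAlgHom _ (Algebra.ofId R _) (algebraMap R _ h - FrobX a h) (by
    simp only [eval₂_sub, eval₂_pow, eval₂_mul, eval₂_X, eval₂_C, AlgHom.coe_toRingHom,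
      Algebra.ofId_apply]
    linear_combination (frobX_sq (a := a) (h := h)))

@[simp]
theorem conj_frobX : conj a h (FrobX a h) = algebraMap R (FrobA a h) h - FrobX a h :=
  AdjoinRoot.liftAlgHom_root ..

theorem counit_comp_conj {ε : FrobA a h →ₗ[R] R} (h1 : ε 1 = 0) (hX : ε (FrobX a h) = 1) :
    ε ∘ₗ (conj a h).toLinearMap = -ε := by
  refine linearMap_ext_s8 ?_ ?_ <;>
    simp [Algebra.algebraMap_eq_smul_one, -AdjoinRoot.algebraMap_eq, h1, hX]

theorem comul_comp_conj {Δ : FrobA a h →ₗ[R] FrobA a h ⊗[R] FrobA a h}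
    (h1 : Δ 1 = 1 ⊗ₜ FrobX a h + FrobX a h ⊗ₜ 1 - h • (1 ⊗ₜ 1))
    (hX : Δ (FrobX a h) = FrobX a h ⊗ₜ FrobX a h + a • (1 ⊗ₜ 1)) :
    Δ ∘ₗ (conj a h).toLinearMap = -(map (conj a h).toLinearMap (conj a h).toLinearMap ∘ₗ Δ) := by
  refine linearMap_ext_s8 ?_ ?_ <;>
  · simp only [LinearMap.comp_apply, LinearMap.neg_apply, AlgHom.toLinearMap_apply, map_one,
      conj_frobX, Algebra.algebraMap_eq_smul_one, map_sub, map_add, map_smul, h1, hX, map_tmul,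
      tmul_sub, sub_tmul, tmul_smul, ← smul_tmul']
    module

end FrobA

/-- `z₂*` is a coalgebra homomorphism from `(A, Δ_W, ε_W)` to `(A, Δ_C, ε_C)`. -/
theorem z2s_coalgebra_hom (a h i : R) (hi : i ^ 2 = -1)
    (ΔC : FrobA a h →ₗ[R] FrobA a h ⊗[R] FrobA a h)
    (hΔ1 : ΔC 1 = (1 : FrobA a h) ⊗ₜ[R] FrobX a h + FrobX a h ⊗ₜ[R] (1 : FrobA a h)
      - h • ((1 : FrobA a h) ⊗ₜ[R] (1 : FrobA a h)))
    (hΔX : ΔC (FrobX a h) = FrobX a h ⊗ₜ[R] FrobX a h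
      + a • ((1 : FrobA a h) ⊗ₜ[R] (1 : FrobA a h)))
    (εC εW : FrobA a h →ₗ[R] R)
    (hεC1 : εC 1 = 0) (hεCX : εC (FrobX a h) = 1)
    (hεW1 : εW 1 = 0) (hεWX : εW (FrobX a h) = -i)
    (z2s : FrobA a h →ₗ[R] FrobA a h)
    (hz2s1 : z2s 1 = i • (1 : FrobA a h))
    (hz2sX : z2s (FrobX a h) = i • (algebraMap R (FrobA a h) h - FrobX a h)) :
    εC ∘ₗ z2s = εW ∧ ΔC ∘ₗ z2s = TensorProduct.map z2s z2s ∘ₗ (i • ΔC) := by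
  have hz : z2s = i • (FrobA.conj a h).toLinearMap :=
    FrobA.linearMap_ext_s8 (by simpa using hz2s1) (by simpa using hz2sX)
  have hεW : εW = -(i • εC) := FrobA.linearMap_ext_s8 (by simp [hεC1, hεW1]) (by simp [hεCX, hεWX])
  constructor
  · rw [hz, LinearMap.comp_smul, FrobA.counit_comp_conj hεC1 hεCX, hεW, smul_neg]
  · rw [hz, map_smul_left, map_smul_right, LinearMap.comp_smul, FrobA.comul_comp_conj hΔ1 hΔX,
      LinearMap.smul_comp, LinearMap.smul_comp, LinearMap.comp_smul, smul_smul, smul_smul,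
      ← pow_two, hi]
    module

end
end

section
/- The genus-two relation (G2) of the dot-free sl(2) foam theory holds for the TQFT structure maps: m(Δ_C(m(Δ_C(1)))) = (h² + 4a)·1 in A. -/
/-!
Write `m` for multiplication. In `A` we have `X² = h·X + a`, so `m(Δ_C(1)) = 2X - h` and
`m(Δ_C(X)) = X² + a = h·X + 2a`. By linearity,
`m(Δ_C(2X - h)) = 2(h·X + 2a) - h(2X - h) = h² + 4a`.
-/

open TensorProduct Polynomial

noncomputable section

variable {R : Type*} [CommRing R]

theorem FrobX_mul_self (a h : R) :
    FrobX a h * FrobX a h = h • FrobX a h + a • (1 : FrobA a h) := by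
  have hroot := AdjoinRoot.mk_self (f := X ^ 2 - C h * X - C a)
  simp only [map_sub, map_pow, map_mul, AdjoinRoot.mk_X, AdjoinRoot.mk_C] at hroot
  simp only [Algebra.smul_def, AdjoinRoot.algebraMap_eq, mul_one]
  linear_combination hroot

section Comultiplication

variable {a h : R} {ΔC : FrobA a h →ₗ[R] FrobA a h ⊗[R] FrobA a h}

theorem mul'_ΔC_one
    (hΔ1 : ΔC 1 = (1 : FrobA a h) ⊗ₜ[R] FrobX a h + FrobX a h ⊗ₜ[R] (1 : FrobA a h)
      - h • ((1 : FrobA a h) ⊗ₜ[R] (1 : FrobA a h))) :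
    LinearMap.mul' R (FrobA a h) (ΔC 1) = (2 : R) • FrobX a h - h • (1 : FrobA a h) := by
  rw [hΔ1]
  simp only [map_sub, map_add, map_smul, LinearMap.mul'_apply, one_mul, mul_one]
  module

theorem mul'_ΔC_FrobX
    (hΔX : ΔC (FrobX a h) = FrobX a h ⊗ₜ[R] FrobX a h
      + a • ((1 : FrobA a h) ⊗ₜ[R] (1 : FrobA a h))) :
    LinearMap.mul' R (FrobA a h) (ΔC (FrobX a h)) = h • FrobX a h + (2 * a) • (1 : FrobA a h) := by
  rw [hΔX]
  simp only [map_add, map_smul, LinearMap.mul'_apply, mul_one, FrobX_mul_self]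
  module

end Comultiplication

/-- the genus-two relation `m(Δ_C(m(Δ_C(1)))) = (h² + 4a)·1`. -/
theorem genus_two_relation (a h : R)
    (ΔC : FrobA a h →ₗ[R] FrobA a h ⊗[R] FrobA a h)
    (hΔ1 : ΔC 1 = (1 : FrobA a h) ⊗ₜ[R] FrobX a h + FrobX a h ⊗ₜ[R] (1 : FrobA a h)
      - h • ((1 : FrobA a h) ⊗ₜ[R] (1 : FrobA a h)))
    (hΔX : ΔC (FrobX a h) = FrobX a h ⊗ₜ[R] FrobX a h
      + a • ((1 : FrobA a h) ⊗ₜ[R] (1 : FrobA a h))) :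
    LinearMap.mul' R (FrobA a h) (ΔC (LinearMap.mul' R (FrobA a h) (ΔC 1))) =
      (h ^ 2 + 4 * a) • (1 : FrobA a h) := by
  rw [mul'_ΔC_one hΔ1]
  simp only [map_sub, map_smul, mul'_ΔC_FrobX hΔX, mul'_ΔC_one hΔ1]
  module

end
end
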